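/- arXiv:2108.11495 — 7 statements merged into one kernel-verified Lean document; each statement's English description precedes it below -/
import Mathlib

section
/- For every nonnegative integer n and every natural number i ≥ 1, f(n,i) = f(|n - 2^{i-1}|, i-1) + f(n, i-1). -/
/-- Number of `i`-bit binary signed-digit representations of the integer `n`. -/
noncomputable def numBSD (n : ℤ) (i : ℕ) : ℕ :=
  Nat.card {b : Fin i → ℤ //
    (∀ j, b j = -1 ∨ b j = 0 ∨ b j = 1) ∧ n = ∑ j, b j * 2 ^ (j : ℕ)}

namespace BSDaux

def S (n : ℤ) (i : ℕ) : Set (Fin i → ℤ) :=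
  {b | (∀ j, b j = -1 ∨ b j = 0 ∨ b j = 1) ∧ n = ∑ j, b j * 2 ^ (j : ℕ)}

lemma numBSD_eq (n : ℤ) (i : ℕ) : numBSD n i = (S n i).ncard := rfl

lemma S_finite (n : ℤ) (i : ℕ) : (S n i).Finite := by
  apply Set.Finite.subset
    (Set.Finite.pi (fun _ : Fin i =>
      ((Set.finite_singleton (1 : ℤ)).insert 0).insert (-1)))
  intro b hb
  rw [Set.mem_pi]
  intro j _
  rcases hb.1 j with h | h | h <;> simp [h]

lemma ncard_neg (m : ℤ) (k : ℕ) : (S (-m) k).ncard = (S m k).ncard := by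
  have key : ∀ (m : ℤ) (b : Fin k → ℤ), b ∈ S (-m) k → (-b) ∈ S m k := by
    rintro m b ⟨hd, hs⟩
    constructor
    · intro j; rcases hd j with h | h | h <;> simp [h]
    · have : ∑ j : Fin k, (-b) j * 2 ^ (j : ℕ) = -∑ j : Fin k, b j * 2 ^ (j : ℕ) := by
        simp [neg_mul]
      rw [this, ← hs]; ring
  refine Nat.card_congr ⟨fun b => ⟨-b.1, key m b.1 b.2⟩,
    fun b => ⟨-b.1, key (-m) b.1 (by simpa using b.2)⟩, ?_, ?_⟩ <;>
    intro b <;> apply Subtype.ext <;> simp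

lemma geom₂ (k : ℕ) : ∑ j : Fin k, (2 : ℤ) ^ (j : ℕ) = 2 ^ k - 1 := by
  rw [Fin.sum_univ_eq_sum_range]
  induction k with
  | zero => simp
  | succ k ih => rw [Finset.sum_range_succ, ih]; ring

lemma S_empty (m : ℤ) (k : ℕ) (hm : 2 ^ k ≤ m) : S m k = ∅ := by
  ext b
  simp only [S, Set.mem_setOf_eq, Set.mem_empty_iff_false, iff_false]
  rintro ⟨hdig, hsum⟩
  have hb : ∀ j : Fin k, b j * 2 ^ (j : ℕ) ≤ 2 ^ (j : ℕ) := by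
    intro j; rcases hdig j with h | h | h <;> simp [h] <;> positivity
  have hle : m ≤ ∑ j : Fin k, (2 : ℤ) ^ (j : ℕ) :=
    hsum ▸ Finset.sum_le_sum (fun j _ => hb j)
  rw [geom₂] at hle
  linarith

lemma key_sum (k : ℕ) (b : Fin (k+1) → ℤ) :
    ∑ j, b j * 2 ^ (j : ℕ)
      = (∑ j : Fin k, Fin.init b j * 2 ^ (j : ℕ)) + b (Fin.last k) * 2 ^ k := by
  rw [Fin.sum_univ_castSucc]
  simp [Fin.init]

lemma ncard_slice (n : ℤ) (k : ℕ) (d : ℤ) (hd : d = -1 ∨ d = 0 ∨ d = 1) :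
    ({b ∈ S n (k+1) | b (Fin.last k) = d}).ncard = (S (n - d * 2 ^ k) k).ncard := by
  refine Nat.card_congr ⟨fun b => ⟨Fin.init b.1, ?_, ?_⟩,
    fun c => ⟨Fin.snoc c.1 d, ⟨⟨?_, ?_⟩, ?_⟩⟩, ?_, ?_⟩
  · intro j; exact b.2.1.1 j.castSucc
  · obtain ⟨⟨hdig, hsum⟩, hlast⟩ := b.2
    rw [key_sum] at hsum
    rw [hlast] at hsum
    linarith
  · intro j
    refine Fin.lastCases ?_ ?_ j
    · simpa using hd
    · intro j'; simpa using c.2.1 j'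
  · obtain ⟨hdig, hsum⟩ := c.2
    rw [key_sum]
    simp only [Fin.init_snoc, Fin.snoc_last]
    linarith
  · simp
  · intro b
    apply Subtype.ext
    have hlast : b.1 (Fin.last k) = d := b.2.2
    simp only [← hlast]
    exact Fin.snoc_init_self b.1
  · intro c
    apply Subtype.ext
    simp

end BSDaux

open BSDaux in
theorem bsd_recurrence (n : ℤ) (hn : 0 ≤ n) (i : ℕ) (hi : 1 ≤ i) :
    numBSD n i = numBSD |n - 2 ^ (i - 1)| (i - 1) + numBSD n (i - 1) := by
  obtain ⟨k, rfl⟩ : ∃ k, i = k + 1 := ⟨i - 1, (Nat.succ_pred_eq_of_pos hi).symm⟩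
  simp only [Nat.add_sub_cancel]
  set A : ℤ → Set (Fin (k+1) → ℤ) := fun d => {b ∈ S n (k+1) | b (Fin.last k) = d} with hA
  have hpart : S n (k+1) = A (-1) ∪ (A 0 ∪ A 1) := by
    ext b
    constructor
    · intro hb
      rcases hb.1 (Fin.last k) with h | h | h <;> simp [hA, Set.mem_sep_iff, hb, h]
    · rintro (⟨h, _⟩ | ⟨h, _⟩ | ⟨h, _⟩) <;> exact h
  have hfin : ∀ d, (A d).Finite := fun d => (S_finite n (k+1)).subset (Set.sep_subset _ _)
  have hdisj : ∀ d d' : ℤ, d ≠ d' → Disjoint (A d) (A d') := by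
    intro d d' hne
    rw [Set.disjoint_left]
    rintro b ⟨_, h1⟩ ⟨_, h2⟩
    exact hne (h1 ▸ h2 ▸ rfl)
  have hcard : (S n (k+1)).ncard = (A (-1)).ncard + ((A 0).ncard + (A 1).ncard) := by
    rw [hpart, Set.ncard_union_eq (by
        rw [Set.disjoint_union_right]
        exact ⟨hdisj _ _ (by norm_num), hdisj _ _ (by norm_num)⟩)
      (hfin _) ((hfin _).union (hfin _)),
      Set.ncard_union_eq (hdisj _ _ (by norm_num)) (hfin _) (hfin _)]
  have hm1 : (A (-1)).ncard = 0 := by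
    rw [hA]
    rw [ncard_slice n k (-1) (by norm_num)]
    have : n - (-1) * 2 ^ k = n + 2 ^ k := by ring
    rw [this, S_empty (n + 2 ^ k) k (by linarith), Set.ncard_empty]
  have h0 : (A 0).ncard = (S n k).ncard := by
    rw [hA, ncard_slice n k 0 (by norm_num)]
    norm_num
  have h1 : (A 1).ncard = (S (n - 2 ^ k) k).ncard := by
    rw [hA, ncard_slice n k 1 (by norm_num)]
    norm_num
  have habs : (S |n - 2 ^ k| k).ncard = (S (n - 2 ^ k) k).ncard := by
    rcases abs_cases (n - 2 ^ k) with ⟨h, _⟩ | ⟨h, _⟩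
    · rw [h]
    · rw [h, ncard_neg]
  rw [numBSD_eq, numBSD_eq, numBSD_eq, hcard, hm1, h0, h1, habs]
  omega
end

section
/- For every integer n and natural numbers k ≤ i, the number of i-bit binary signed-digit representations of 2^k · n equals the number of (i-k)-bit binary signed-digit representations of n; that is, f(2^k · n, i) = f(n, i-k). -/
lemma sum_split (j : ℕ) (b : Fin (j+1) → ℤ) :
    ∑ t, b t * 2 ^ (t : ℕ) = b 0 + 2 * ∑ t : Fin j, b t.succ * 2 ^ (t : ℕ) := by
  rw [Fin.sum_univ_succ, Finset.mul_sum]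
  congr 1
  · simp
  · exact Finset.sum_congr rfl fun t _ => by simp [pow_succ]; ring

lemma bzero (m : ℤ) (j : ℕ) (b : Fin (j+1) → ℤ)
    (hb : ∀ t, b t = -1 ∨ b t = 0 ∨ b t = 1)
    (hs : 2 * m = ∑ t, b t * 2 ^ (t : ℕ)) : b 0 = 0 := by
  rw [sum_split] at hs
  rcases hb 0 with h | h | h
  · omega
  · exact h
  · omega

lemma numBSD_two_mul (m : ℤ) (j : ℕ) : numBSD (2 * m) (j + 1) = numBSD m j := by
  apply Nat.card_congr
  refine
    { toFun := fun b => ⟨fun t => b.1 t.succ, fun t => b.2.1 t.succ, ?_⟩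
      invFun := fun c => ⟨Fin.cons 0 c.1, ?_, ?_⟩
      left_inv := ?_
      right_inv := ?_ }
  · obtain ⟨b, hb, hs⟩ := b
    have h0 := bzero m j b hb hs
    rw [sum_split, h0, zero_add] at hs
    linarith
  · intro t
    refine Fin.cases ?_ ?_ t
    · simp
    · intro t'; simp [c.2.1 t']
  · rw [sum_split]
    simp [c.2.2]
  · rintro ⟨b, hb, hs⟩
    have h0 := bzero m j b hb hs
    apply Subtype.ext
    have h := Fin.cons_self_tail b
    rw [h0] at h
    exact h
  · rintro ⟨c, hc⟩
    apply Subtype.ext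
    funext t
    simp

theorem bsd_two_pow_mul (n : ℤ) (k i : ℕ) (hk : k ≤ i) :
    numBSD (2 ^ k * n) i = numBSD n (i - k) := by
  induction k generalizing i with
  | zero => simp
  | succ k ih =>
    obtain ⟨i', rfl⟩ : ∃ i', i = i' + 1 := ⟨i - 1, by omega⟩
    have : (2 : ℤ) ^ (k + 1) * n = 2 * (2 ^ k * n) := by ring
    rw [this, numBSD_two_mul, ih i' (by omega)]
    congr 1
    omega
end

section
/- For every nonnegative integer n and every natural number i ≥ 1, f(2n+1, i) = f(n, i-1) + f(n+1, i-1). -/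
theorem Fin.sum_cons_mul_pow {R : Type*} [CommSemiring R] {k : ℕ} (a x : R) (c : Fin k → R) :
    ∑ j : Fin (k + 1), (Fin.cons a c : Fin (k + 1) → R) j * x ^ (j : ℕ) =
      a + x * ∑ j, c j * x ^ (j : ℕ) := by
  simp only [Fin.sum_univ_succ, Fin.cons_zero, Fin.cons_succ, Fin.val_zero, pow_zero, mul_one,
    Fin.val_succ, pow_succ, Finset.mul_sum]
  congr 1
  exact Finset.sum_congr rfl fun _ _ => by ring

abbrev BSDRep (n : ℤ) (i : ℕ) : Type :=
  {b : Fin i → ℤ // (∀ j, b j = -1 ∨ b j = 0 ∨ b j = 1) ∧ n = ∑ j, b j * 2 ^ (j : ℕ)}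

namespace BSDRep

variable {m : ℤ} {k : ℕ}

instance (n : ℤ) (i : ℕ) : Finite (BSDRep n i) :=
  ((Set.Finite.pi' fun _ => Set.toFinite ({-1, 0, 1} : Set ℤ)).subset
    fun _ hb => hb.1).to_subtype

theorem value_eq_digit_zero_add (b : BSDRep m (k + 1)) :
    m = b.1 0 + 2 * ∑ j : Fin k, Fin.tail b.1 j * 2 ^ (j : ℕ) :=
  b.2.2.trans (by rw [← Fin.sum_cons_mul_pow, Fin.cons_self_tail])

def consEquiv {m n d : ℤ} (hd : d = -1 ∨ d = 0 ∨ d = 1) (hm : m = d + 2 * n) :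
    BSDRep n k ≃ {b : BSDRep m (k + 1) // b.1 0 = d} where
  toFun c := ⟨⟨Fin.cons d c.1, Fin.forall_fin_succ.2 ⟨hd, c.2.1⟩,
    by rw [Fin.sum_cons_mul_pow, ← c.2.2, hm]⟩, rfl⟩
  invFun b := ⟨Fin.tail b.1.1, fun j => b.1.2.1 j.succ, by
    have := value_eq_digit_zero_add b.1
    rw [b.2] at this
    omega⟩
  left_inv c := rfl
  right_inv b := Subtype.ext <| Subtype.ext <| b.2 ▸ Fin.cons_self_tail b.1.1

theorem digit_zero_ne_zero_of_odd (hm : Odd m) (b : BSDRep m (k + 1)) : b.1 0 ≠ 0 := by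
  intro h
  rw [value_eq_digit_zero_add b, h, zero_add] at hm
  exact Int.not_odd_iff_even.2 (even_two_mul _) hm

theorem numBSD_succ_of_odd {n₁ n₂ : ℤ} (h₁ : m = 1 + 2 * n₁) (h₂ : m = -1 + 2 * n₂) :
    numBSD m (k + 1) = numBSD n₁ k + numBSD n₂ k := by
  have hodd (b : BSDRep m (k + 1)) : b.1 0 ≠ 1 ↔ b.1 0 = -1 := by
    have := digit_zero_ne_zero_of_odd ⟨n₁, by rw [h₁]; ring⟩ b
    rcases b.2.1 0 with h | h | h <;> simp_all
  calc numBSD m (k + 1)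
      = Nat.card ({b : BSDRep m (k + 1) // b.1 0 = 1} ⊕ {b : BSDRep m (k + 1) // b.1 0 ≠ 1}) :=
        Nat.card_congr (Equiv.sumCompl _).symm
    _ = Nat.card {b : BSDRep m (k + 1) // b.1 0 = 1} +
        Nat.card {b : BSDRep m (k + 1) // b.1 0 = -1} := by
        rw [Nat.card_sum, Nat.card_congr (Equiv.subtypeEquivRight hodd)]
    _ = numBSD n₁ k + numBSD n₂ k :=
        congr_arg₂ (· + ·) (Nat.card_congr (consEquiv (by simp) h₁).symm)
          (Nat.card_congr (consEquiv (by simp) h₂).symm)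

end BSDRep

theorem bsd_two_mul_add_one_general (n : ℤ) (i : ℕ) (hi : 1 ≤ i) :
    numBSD (2 * n + 1) i = numBSD n (i - 1) + numBSD (n + 1) (i - 1) := by
  obtain ⟨k, rfl⟩ := Nat.exists_eq_add_of_le' hi
  exact BSDRep.numBSD_succ_of_odd (by ring) (by ring)

theorem bsd_two_mul_add_one (n : ℤ) (hn : 0 ≤ n) (i : ℕ) (hi : 1 ≤ i) :
    numBSD (2 * n + 1) i = numBSD n (i - 1) + numBSD (n + 1) (i - 1) :=
  bsd_two_mul_add_one_general n i hi
end

section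
/- Let n be a positive natural number, let k be the least natural number with n ≤ 2^k (i.e., k = ⌈log₂ n⌉), and suppose n < 2^k and k < i. Then f(2^i - n, i) = c(n) and c(n) = f(2^k - n, k). -/
/-- Stern's diatomic sequence: `c 0 = 0`, `c 1 = 1`, `c (2m) = c m`,
`c (2m+1) = c m + c (m+1)`. -/
def stern : ℕ → ℕ
  | 0 => 0
  | 1 => 1
  | n + 2 =>
    if h : n % 2 = 0 then stern (n / 2 + 1)
    else stern (n / 2 + 1) + stern (n / 2 + 2)
decreasing_by all_goals omega


def Good (i : ℕ) (n : ℤ) (b : Fin i → ℤ) : Prop :=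
  (∀ j, b j = -1 ∨ b j = 0 ∨ b j = 1) ∧ n = ∑ j, b j * 2 ^ (j : ℕ)

lemma numBSD_eq (n : ℤ) (i : ℕ) : numBSD n i = Nat.card {b : Fin i → ℤ // Good i n b} := rfl

instance goodFinite (i : ℕ) (n : ℤ) : Finite {b : Fin i → ℤ // Good i n b} := by
  have hS : ({-1, 0, 1} : Set ℤ).Finite :=
    (Set.finite_singleton 1).insert 0 |>.insert (-1)
  haveI := hS.to_subtype
  apply Finite.of_injective (f := fun b : {b : Fin i → ℤ // Good i n b} =>
    (fun j => (⟨b.1 j, by rcases b.2.1 j with h | h | h <;> simp [h]⟩ : ({-1,0,1} : Set ℤ))))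
  intro b b' h
  ext j
  exact congrArg Subtype.val (congrFun h j)

lemma sum_succ {i : ℕ} (b : Fin (i + 1) → ℤ) :
    ∑ j, b j * 2 ^ (j : ℕ) = b 0 + 2 * ∑ j : Fin i, b j.succ * 2 ^ (j : ℕ) := by
  rw [Fin.sum_univ_succ]
  simp [Finset.mul_sum, pow_succ]
  exact Finset.sum_congr rfl fun j _ => by ring

lemma numBSD_zero_bits (n : ℤ) : numBSD n 0 = if n = 0 then 1 else 0 := by
  rw [numBSD_eq]
  split_ifs with h
  · subst h
    rw [Nat.card_eq_one_iff_unique]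
    constructor
    · constructor
      intro a b
      ext j
      exact absurd j.2 (by omega)
    · exact ⟨⟨fun j => 0, fun j => by exact absurd j.2 (by omega), by simp⟩⟩
  · rw [Nat.card_eq_zero]
    left
    constructor
    intro b
    exact h (by simpa using b.2.2)

lemma numBSD_eq_zero {n : ℤ} {i : ℕ} (h : 2 ^ i ≤ n) : numBSD n i = 0 := by
  rw [numBSD_eq, Nat.card_eq_zero]
  left
  constructor
  intro b
  have hle : n ≤ 2 ^ i - 1 := by
    have h1 : ∀ j : Fin i, b.1 j * 2 ^ (j : ℕ) ≤ 2 ^ (j : ℕ) := by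
      intro j
      rcases b.2.1 j with h' | h' | h' <;> rw [h'] <;>
        nlinarith [pow_pos (by norm_num : (0:ℤ) < 2) (j : ℕ)]
    have h2 : n ≤ ∑ j : Fin i, (2 : ℤ) ^ (j : ℕ) := by
      rw [b.2.2]; exact Finset.sum_le_sum fun j _ => h1 j
    have h3 : ∑ j : Fin i, (2 : ℤ) ^ (j : ℕ) = 2 ^ i - 1 := by
      rw [Fin.sum_univ_eq_sum_range]
      have := geom_sum_mul (2 : ℤ) i
      simpa using this
    omega
  omega

/-- even recurrence -/
lemma numBSD_even (m : ℤ) (i : ℕ) : numBSD (2 * m) (i + 1) = numBSD m i := by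
  rw [numBSD_eq, numBSD_eq]
  apply Nat.card_congr
  refine ⟨fun b => ⟨fun j => b.1 j.succ, ?_⟩, fun b => ⟨Fin.cons 0 b.1, ?_⟩, ?_, ?_⟩
  · obtain ⟨hd, hs⟩ := b.2
    have hsum := sum_succ b.1
    have h0 : b.1 0 = 0 := by
      rcases hd 0 with h | h | h <;> omega
    refine ⟨fun j => hd j.succ, ?_⟩
    show m = ∑ j : Fin i, b.1 j.succ * 2 ^ (j : ℕ)
    omega
  · obtain ⟨hd, hs⟩ := b.2
    constructor
    · intro j
      refine Fin.cases ?_ ?_ j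
      · simp
      · intro j'; simpa using hd j'
    · rw [sum_succ]
      simp [hs]
  · intro b
    obtain ⟨hd, hs⟩ := b.2
    have hsum := sum_succ b.1
    have h0 : b.1 0 = 0 := by rcases hd 0 with h | h | h <;> omega
    ext j
    refine Fin.cases ?_ ?_ j
    · simpa using h0.symm
    · intro j'; simp
  · intro b
    ext j
    simp

/-- odd recurrence -/
lemma numBSD_odd (m : ℤ) (i : ℕ) :
    numBSD (2 * m + 1) (i + 1) = numBSD m i + numBSD (m + 1) i := by
  rw [numBSD_eq, numBSD_eq, numBSD_eq, ← Nat.card_sum]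
  apply Nat.card_congr
  classical
  refine ⟨fun b => if h : b.1 0 = 1 then Sum.inl ⟨fun j => b.1 j.succ, ?_⟩
      else Sum.inr ⟨fun j => b.1 j.succ, ?_⟩,
    fun b => Sum.elim (fun b => ⟨Fin.cons 1 b.1, ?_⟩) (fun b => ⟨Fin.cons (-1) b.1, ?_⟩) b,
    ?_, ?_⟩
  · obtain ⟨hd, hs⟩ := b.2
    have hsum := sum_succ b.1
    refine ⟨fun j => hd j.succ, ?_⟩
    show m = ∑ j : Fin i, b.1 j.succ * 2 ^ (j : ℕ)
    omega
  · obtain ⟨hd, hs⟩ := b.2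
    have hsum := sum_succ b.1
    have h0 : b.1 0 = -1 := by rcases hd 0 with h' | h' | h' <;> omega
    refine ⟨fun j => hd j.succ, ?_⟩
    show m + 1 = ∑ j : Fin i, b.1 j.succ * 2 ^ (j : ℕ)
    omega
  · obtain ⟨hd, hs⟩ := b.2
    constructor
    · intro j
      refine Fin.cases ?_ ?_ j
      · simp
      · intro j'; simpa using hd j'
    · rw [sum_succ]
      simp [hs]
      omega
  · obtain ⟨hd, hs⟩ := b.2
    constructor
    · intro j
      refine Fin.cases ?_ ?_ j
      · simp
      · intro j'; simpa using hd j'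
    · rw [sum_succ]
      simp [hs]
      omega
  · intro b
    obtain ⟨hd, hs⟩ := b.2
    have hsum := sum_succ b.1
    dsimp only
    by_cases h : b.1 0 = 1
    · rw [dif_pos h]
      simp only [Sum.elim_inl]
      ext j
      refine Fin.cases ?_ ?_ j
      · simpa using h.symm
      · intro j'; simp
    · rw [dif_neg h]
      have h0 : b.1 0 = -1 := by rcases hd 0 with h' | h' | h' <;> omega
      simp only [Sum.elim_inr]
      ext j
      refine Fin.cases ?_ ?_ j
      · simpa using h0.symm
      · intro j'; simp
  · intro b
    cases b with
    | inl b =>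
      dsimp only [Sum.elim_inl]
      rw [dif_pos (by simp)]
      congr 1
    | inr b =>
      dsimp only [Sum.elim_inr]
      rw [dif_neg (by simp)]
      congr 1

lemma stern_two_mul (m : ℕ) : stern (2 * m) = stern m := by
  match m with
  | 0 => rfl
  | m + 1 =>
    show stern (2 * m + 2) = _
    rw [stern]
    simp [Nat.mul_mod_right, Nat.mul_div_cancel_left]

lemma stern_two_mul_add_one (m : ℕ) (hm : 0 < m) :
    stern (2 * m + 1) = stern m + stern (m + 1) := by
  obtain ⟨m', rfl⟩ : ∃ m', m = m' + 1 := ⟨m - 1, by omega⟩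
  show stern (2 * m' + 1 + 2) = _
  rw [stern]
  have h1 : (2 * m' + 1) % 2 = 1 := by omega
  have h2 : (2 * m' + 1) / 2 = m' := by omega
  simp [h1, h2]

lemma main_lemma : ∀ i : ℕ, ∀ n : ℕ, 0 < n → n ≤ 2 ^ i →
    numBSD ((2 : ℤ) ^ i - n) i = stern n := by
  intro i
  induction i with
  | zero =>
    intro n h1 h2
    have : n = 1 := by omega
    subst this
    simp [numBSD_zero_bits, stern]
  | succ i ih =>
    intro n h1 h2
    rcases Nat.even_or_odd n with ⟨m, hm⟩ | ⟨m, hm⟩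
    · -- n = 2m
      subst hm
      have hx : (2 : ℤ) ^ (i + 1) - (m + m : ℕ) = 2 * ((2 : ℤ) ^ i - m) := by
        push_cast
        ring
      rw [hx, numBSD_even, ih m (by omega) (by omega)]
      rw [show m + m = 2 * m by ring, stern_two_mul]
    · -- n = 2m + 1
      subst hm
      have hx : (2 : ℤ) ^ (i + 1) - (2 * m + 1 : ℕ) = 2 * ((2 : ℤ) ^ i - (m + 1)) + 1 := by
        push_cast
        ring
      have hm1 : m + 1 ≤ 2 ^ i := by
        have : 2 * m + 1 ≤ 2 ^ (i + 1) := h2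
        have h2m : 2 * m + 1 < 2 ^ (i + 1) := by
          rcases lt_or_eq_of_le this with h | h
          · exact h
          · exfalso; omega
        omega
      rw [hx, numBSD_odd]
      have hfirst : numBSD ((2 : ℤ) ^ i - (m + 1 : ℕ)) i = stern (m + 1) :=
        ih (m + 1) (by omega) hm1
      have hc : ((2 : ℤ) ^ i - (m + 1)) = (2 : ℤ) ^ i - ((m + 1 : ℕ) : ℤ) := by push_cast; ring
      rw [hc, hfirst]
      rcases Nat.eq_zero_or_pos m with rfl | hmpos
      · have : ((2 : ℤ) ^ i - 0 + 1) = 2 ^ i + 1 := by ring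
        rw [show ((2 : ℤ) ^ i - (((0:ℕ) + 1 : ℕ) : ℤ) + 1) = 2 ^ i by push_cast; ring]
        rw [numBSD_eq_zero (le_refl _)]
        simp [stern]
      · have hsecond : numBSD ((2 : ℤ) ^ i - (m : ℕ)) i = stern m :=
          ih m hmpos (by omega)
      
        rw [show ((2 : ℤ) ^ i - ((m + 1 : ℕ) : ℤ) + 1) = (2 : ℤ) ^ i - (m : ℕ) by push_cast; ring]
        rw [hsecond, stern_two_mul_add_one m hmpos]
        omega

theorem bsd_flip_eq_stern (n k i : ℕ) (hn : 0 < n)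
    (hk : IsLeast {j : ℕ | n ≤ 2 ^ j} k) (hnk : n < 2 ^ k) (hki : k < i) :
    numBSD ((2 : ℤ) ^ i - n) i = stern n ∧ stern n = numBSD ((2 : ℤ) ^ k - n) k := by
  have h1 : n ≤ 2 ^ i := le_of_lt (lt_of_lt_of_le hnk (Nat.pow_le_pow_right (by norm_num) (le_of_lt hki)))
  exact ⟨main_lemma i n hn h1, (main_lemma k n hn (le_of_lt hnk)).symm⟩
end

section
/- For every natural number i ≥ 1, the number of i-bit binary signed-digit representations of 2^{i-1} + 1 equals i - 1; that is, f(2^{i-1} + 1, i) = i - 1. -/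
lemma numBSD_eq_card (n : ℤ) (i : ℕ) : numBSD n i = Nat.card (BSDRep n i) := rfl

lemma mem_signedDigits {d : ℤ} :
    d ∈ ({-1, 0, 1} : Finset ℤ) ↔ d = -1 ∨ d = 0 ∨ d = 1 := by
  simp

instance BSDRep.finite (n : ℤ) (i : ℕ) : Finite (BSDRep n i) :=
  Finite.of_injective
    (fun b j => (⟨b.1 j, mem_signedDigits.2 (b.2.1 j)⟩ : ({-1, 0, 1} : Finset ℤ)))
    fun _ _ h => Subtype.ext <| funext fun j => congrArg Subtype.val (congrFun h j)

lemma abs_sum_signedDigits_lt {i : ℕ} {b : Fin i → ℤ}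
    (hb : ∀ j, b j = -1 ∨ b j = 0 ∨ b j = 1) :
    |∑ j, b j * 2 ^ (j : ℕ)| < 2 ^ i := by
  have hgeom : ∑ j : Fin i, (2 : ℤ) ^ (j : ℕ) = 2 ^ i - 1 := by
    rw [Fin.sum_univ_eq_sum_range (fun j => (2 : ℤ) ^ j), ← geom_sum_mul]
    norm_num
  calc |∑ j, b j * 2 ^ (j : ℕ)|
      ≤ ∑ j : Fin i, |b j * 2 ^ (j : ℕ)| := Finset.abs_sum_le_sum_abs _ _
    _ ≤ ∑ j : Fin i, (2 : ℤ) ^ (j : ℕ) := Finset.sum_le_sum fun j _ => by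
        rcases hb j with h | h | h <;> simp [h, abs_of_pos]
    _ < 2 ^ i := by rw [hgeom]; linarith

lemma numBSD_eq_zero_of_two_pow_le_abs {n : ℤ} {i : ℕ} (h : 2 ^ i ≤ |n|) : numBSD n i = 0 :=
  have : IsEmpty (BSDRep n i) := ⟨fun b => by
    have := abs_sum_signedDigits_lt b.2.1
    rw [← b.2.2] at this
    linarith⟩
  Nat.card_of_isEmpty

lemma numBSD_zero_zero : numBSD 0 0 = 1 :=
  Nat.card_eq_one_iff_exists.2
    ⟨⟨Fin.elim0, by simp⟩, fun _ => Subtype.ext (Subsingleton.elim _ _)⟩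

def bsdRepSuccEquiv (n : ℤ) (i : ℕ) :
    BSDRep n (i + 1) ≃ Σ d : ({-1, 0, 1} : Finset ℤ), BSDRep (n - d * 2 ^ i) i where
  toFun b := ⟨⟨b.1 (Fin.last i), mem_signedDigits.2 (b.2.1 _)⟩, Fin.init b.1,
    fun _ => b.2.1 _, by
      have h := b.2.2
      rw [Fin.sum_univ_castSucc] at h
      simp only [Fin.val_castSucc, Fin.val_last] at h
      simp only [Fin.init]
      linarith⟩
  invFun p := ⟨Fin.snoc p.2.1 p.1,
    Fin.lastCases (by simpa using mem_signedDigits.1 p.1.2) (fun j => by simpa using p.2.2.1 j),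
    by rw [Fin.sum_univ_castSucc]; simp [← p.2.2.2]⟩
  left_inv b := Subtype.ext (Fin.snoc_init_self b.1)
  right_inv p := Sigma.subtype_ext (Subtype.ext (Fin.snoc_last (α := fun _ => ℤ) _ _))
    (Fin.init_snoc (α := fun _ => ℤ) _ _)

lemma numBSD_succ (n : ℤ) (i : ℕ) :
    numBSD n (i + 1) = numBSD (n + 2 ^ i) i + numBSD n i + numBSD (n - 2 ^ i) i := by
  simp only [numBSD_eq_card]
  rw [Nat.card_congr (bsdRepSuccEquiv n i), Nat.card_sigma,
    Finset.sum_coe_sort {-1, 0, 1} fun d => Nat.card (BSDRep (n - d * 2 ^ i) i)]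
  simp [add_assoc]

lemma numBSD_one_sub_two_pow (i : ℕ) : numBSD (1 - 2 ^ i) i = 1 := by
  induction i with
  | zero => simpa using numBSD_zero_zero
  | succ i ih =>
    have hi : (1 : ℤ) ≤ 2 ^ i := one_le_pow₀ (by norm_num)
    rw [numBSD_succ, show (1 : ℤ) - 2 ^ (i + 1) + 2 ^ i = 1 - 2 ^ i by ring, ih,
      numBSD_eq_zero_of_two_pow_le_abs (le_abs.2 (.inr (by rw [pow_succ]; linarith))),
      numBSD_eq_zero_of_two_pow_le_abs (le_abs.2 (.inr (by rw [pow_succ]; linarith)))]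

lemma numBSD_one (i : ℕ) : numBSD 1 i = i := by
  induction i with
  | zero => exact numBSD_eq_zero_of_two_pow_le_abs (by simp)
  | succ i ih =>
    rw [numBSD_succ, ih, numBSD_one_sub_two_pow,
      numBSD_eq_zero_of_two_pow_le_abs (le_abs.2 (.inl (by linarith))), zero_add, add_comm]

theorem bsd_half_plus_one_general (i : ℕ) :
    numBSD ((2 : ℤ) ^ (i - 1) + 1) i = i - 1 := by
  cases i with
  | zero => exact numBSD_eq_zero_of_two_pow_le_abs (by norm_num)
  | succ m =>
    have : (0 : ℤ) < 2 ^ m := by positivity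
    rw [Nat.add_sub_cancel, numBSD_succ, add_sub_cancel_left, numBSD_one,
      numBSD_eq_zero_of_two_pow_le_abs (le_abs.2 (.inl (by linarith))),
      numBSD_eq_zero_of_two_pow_le_abs (le_abs.2 (.inl (by linarith))), zero_add, zero_add]

theorem bsd_half_plus_one (i : ℕ) (hi : 1 ≤ i) :
    numBSD ((2 : ℤ) ^ (i - 1) + 1) i = i - 1 :=
  bsd_half_plus_one_general i
end

section
/- Let n and i be natural numbers with n < 2^i. Then the number of i-bit binary signed-digit representations of n equals the number of hyperbinary representations of 2^i - 1 - n; that is, f(n,i) = h(2^i - 1 - n). -/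
/-- Number of hyperbinary representations of the natural number `m`. -/
noncomputable def numHyper (m : ℕ) : ℕ :=
  Nat.card {d : ℕ →₀ ℕ // (∀ j, d j ≤ 2) ∧ m = d.sum fun j a => a * 2 ^ j}

noncomputable def toHyperFun (i : ℕ) (b : Fin i → ℤ) : ℕ →₀ ℕ :=
  Finsupp.onFinset (Finset.range i)
    (fun j => if hj : j < i then (1 - b ⟨j, hj⟩).toNat else 0)
    (by
      intro j hj
      simp only [Finset.mem_range]
      by_contra hij
      exact hj (dif_neg hij))

lemma toHyperFun_apply_lt (i : ℕ) (b : Fin i → ℤ) (j : ℕ) (hj : j < i) :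
    toHyperFun i b j = (1 - b ⟨j, hj⟩).toNat := by
  simp [toHyperFun, dif_pos hj]

lemma toHyperFun_sum (i : ℕ) (b : Fin i → ℤ) :
    (toHyperFun i b).sum (fun j a => a * 2 ^ j)
      = ∑ j : Fin i, (1 - b j).toNat * 2 ^ (j : ℕ) := by
  rw [toHyperFun, Finsupp.onFinset_sum _ (fun a => by simp)]
  rw [← Fin.sum_univ_eq_sum_range
    (fun j => (if hj : j < i then (1 - b ⟨j, hj⟩).toNat else 0) * 2 ^ j)]
  exact Finset.sum_congr rfl (fun j _ => by simp [j.isLt])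

lemma support_bound {i m : ℕ} (hmi : m < 2 ^ i) (d : ℕ →₀ ℕ)
    (hd : m = d.sum fun j a => a * 2 ^ j) : ∀ j, i ≤ j → d j = 0 := by
  intro j hj
  by_contra hne
  have hjs : j ∈ d.support := Finsupp.mem_support_iff.mpr hne
  have h1 : d j * 2 ^ j ≤ m := by
    rw [hd, Finsupp.sum]
    exact Finset.single_le_sum (f := fun k => d k * 2 ^ k) (fun k _ => Nat.zero_le _) hjs
  have h2 : 2 ^ i ≤ d j * 2 ^ j :=
    le_trans (Nat.pow_le_pow_right (by norm_num) hj)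
      (Nat.le_mul_of_pos_left _ (Nat.pos_of_ne_zero hne))
  omega

lemma sum_range_of_bound {i : ℕ} (d : ℕ →₀ ℕ) (h0 : ∀ j, i ≤ j → d j = 0) :
    d.sum (fun j a => a * 2 ^ j) = ∑ j ∈ Finset.range i, d j * 2 ^ j := by
  apply Finsupp.sum_of_support_subset _ _ _ (fun j _ => by simp)
  intro j hj
  rw [Finsupp.mem_support_iff] at hj
  rw [Finset.mem_range]
  by_contra hij
  exact hj (h0 j (le_of_not_gt hij))

lemma geom_int (i : ℕ) : ∑ j : Fin i, (2 : ℤ) ^ (j : ℕ) = 2 ^ i - 1 := by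
  rw [Fin.sum_univ_eq_sum_range (fun j => (2 : ℤ) ^ j)]
  have := geom_sum_mul (2 : ℤ) i
  simpa using this

theorem bsd_eq_hyper (n i : ℕ) (h : n < 2 ^ i) :
    numBSD (n : ℤ) i = numHyper (2 ^ i - 1 - n) := by
  classical
  have hp : 1 ≤ 2 ^ i := Nat.one_le_two_pow
  set m : ℕ := 2 ^ i - 1 - n with hm
  have hmZ : (m : ℤ) = 2 ^ i - 1 - n := by
    have : (m : ℤ) + n + 1 = 2 ^ i := by
      have : m + n + 1 = 2 ^ i := by omega
      exact_mod_cast congrArg (Nat.cast : ℕ → ℤ) this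
    linarith
  have hmi : m < 2 ^ i := by omega
  apply Nat.card_congr
  refine
    { toFun := fun b => ⟨toHyperFun i b.1, ?_, ?_⟩
      invFun := fun d => ⟨fun j => 1 - (d.1 j : ℤ), ?_, ?_⟩
      left_inv := ?_
      right_inv := ?_ }
  · -- digits ≤ 2
    intro j
    by_cases hj : j < i
    · rw [toHyperFun_apply_lt i b.1 j hj]
      rcases b.2.1 ⟨j, hj⟩ with h1 | h1 | h1 <;> rw [h1] <;> norm_num
    · have : toHyperFun i b.1 j = 0 := by
        simp [toHyperFun, dif_neg hj]
      omega
  · -- sum equals m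
    obtain ⟨b, hb1, hb2⟩ := b
    rw [toHyperFun_sum]
    have hcast : ∀ j : Fin i, ((1 - b j).toNat : ℤ) = 1 - b j := by
      intro j
      apply Int.toNat_of_nonneg
      rcases hb1 j with h1 | h1 | h1 <;> rw [h1] <;> norm_num
    have : (m : ℤ) = ∑ j : Fin i, ((1 - b j).toNat : ℤ) * 2 ^ (j : ℕ) := by
      rw [hmZ]
      calc (2 : ℤ) ^ i - 1 - n
          = (∑ j : Fin i, (2 : ℤ) ^ (j : ℕ)) - ∑ j : Fin i, b j * 2 ^ (j : ℕ) := by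
            rw [geom_int, hb2]
        _ = ∑ j : Fin i, (1 - b j) * 2 ^ (j : ℕ) := by
            rw [← Finset.sum_sub_distrib]
            exact Finset.sum_congr rfl (fun j _ => by ring)
        _ = ∑ j : Fin i, ((1 - b j).toNat : ℤ) * 2 ^ (j : ℕ) := by
            exact Finset.sum_congr rfl (fun j _ => by rw [hcast j])
    exact_mod_cast this
  · -- b values in {-1,0,1}
    intro j
    have := d.2.1 (j : ℕ)
    interval_cases hdj : d.1 (j : ℕ) <;> simp [hdj]
  · -- n = bsd sum
    obtain ⟨d, hd1, hd2⟩ := d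
    have h0 : ∀ j, i ≤ j → d j = 0 := support_bound hmi d hd2
    have hsum : (m : ℤ) = ∑ j : Fin i, (d (j : ℕ) : ℤ) * 2 ^ (j : ℕ) := by
      have : m = ∑ j ∈ Finset.range i, d j * 2 ^ j := by
        rw [hd2]; exact sum_range_of_bound d h0
      rw [this]
      push_cast
      rw [Fin.sum_univ_eq_sum_range (fun j => (d j : ℤ) * 2 ^ j)]
    have : (n : ℤ) = ∑ j : Fin i, (1 - (d (j : ℕ) : ℤ)) * 2 ^ (j : ℕ) := by
      have h3 : ∑ j : Fin i, (1 - (d (j : ℕ) : ℤ)) * 2 ^ (j : ℕ)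
          = (∑ j : Fin i, (2 : ℤ) ^ (j : ℕ)) - ∑ j : Fin i, (d (j : ℕ) : ℤ) * 2 ^ (j : ℕ) := by
        rw [← Finset.sum_sub_distrib]
        exact Finset.sum_congr rfl (fun j _ => by ring)
      rw [h3, geom_int, ← hsum, hmZ]
      ring
    exact this
  · -- left inverse
    rintro ⟨b, hb1, hb2⟩
    apply Subtype.ext
    funext j
    simp only
    rw [toHyperFun_apply_lt i b (j : ℕ) j.isLt]
    have : (1 - b j) ≥ 0 := by
      rcases hb1 j with h1 | h1 | h1 <;> rw [h1] <;> norm_num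
    rw [Int.toNat_of_nonneg this]
    simp
  · -- right inverse
    rintro ⟨d, hd1, hd2⟩
    apply Subtype.ext
    ext j
    simp only
    by_cases hj : j < i
    · rw [toHyperFun_apply_lt _ _ j hj]
      simp
    · have h1 : toHyperFun i (fun k : Fin i => 1 - (d (k : ℕ) : ℤ)) j = 0 := by
        rw [toHyperFun, Finsupp.onFinset_apply]
        exact dif_neg hj
      rw [h1, support_bound hmi d hd2 j (le_of_not_gt hj)]
end

section
/- Let n be a positive natural number with n < 2^i, and let k be the least natural number with n ≤ 2^k (i.e., k = ⌈log₂ n⌉), so that k ≤ i. Then f(n,i) = f(n,k) + (i-k) · f(2^k - n, k). -/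
namespace BSDaux

def P (n : ℤ) (i : ℕ) (b : Fin i → ℤ) : Prop :=
  (∀ j, b j = -1 ∨ b j = 0 ∨ b j = 1) ∧ n = ∑ j, b j * 2 ^ (j : ℕ)

lemma numBSD_def (n : ℤ) (i : ℕ) : numBSD n i = Nat.card {b : Fin i → ℤ // P n i b} := rfl

instance finP (n : ℤ) (i : ℕ) : Finite {b : Fin i → ℤ // P n i b} := by
  have hsub : {b : Fin i → ℤ | P n i b} ⊆ Set.pi Set.univ (fun _ => ({-1, 0, 1} : Set ℤ)) := by
    intro b hb j _
    rcases hb.1 j with h | h | h <;> simp [h]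
  have hf : {b : Fin i → ℤ | P n i b}.Finite :=
    Set.Finite.subset (Set.Finite.pi (fun _ => Set.toFinite _)) hsub
  exact hf.to_subtype

lemma sum_pow (i : ℕ) : (∑ j : Fin i, (2 : ℤ) ^ (j : ℕ)) = 2 ^ i - 1 := by
  induction i with
  | zero => simp
  | succ m ih =>
    rw [Fin.sum_univ_castSucc]
    simp only [Fin.coe_castSucc, Fin.val_last, ih]
    ring

lemma eq_zero_of_ge (n : ℤ) (i : ℕ) (h : 2 ^ i ≤ n) : numBSD n i = 0 := by
  rw [numBSD_def, Nat.card_eq_zero]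
  left
  refine ⟨fun x => ?_⟩
  obtain ⟨b, hb1, hb2⟩ := x
  have hle : n ≤ 2 ^ i - 1 := by
    rw [hb2, ← sum_pow i]
    apply Finset.sum_le_sum
    intro j _
    have h1 : b j ≤ 1 := by rcases hb1 j with h | h | h <;> simp [h]
    have h2 : (0:ℤ) ≤ 2 ^ (j : ℕ) := by positivity
    nlinarith
  linarith

lemma neg_eq (n : ℤ) (i : ℕ) : numBSD (-n) i = numBSD n i := by
  rw [numBSD_def, numBSD_def]
  apply Nat.card_congr
  have key : ∀ m : ℤ, ∀ b : Fin i → ℤ, P m i b → P (-m) i (fun j => - b j) := by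
    rintro m b ⟨h1, h2⟩
    refine ⟨fun j => ?_, ?_⟩
    · rcases h1 j with h | h | h <;> simp [h]
    · rw [h2, ← Finset.sum_neg_distrib]
      apply Finset.sum_congr rfl
      intro j _
      ring
  refine ⟨fun x => ⟨fun j => - x.1 j, ?_⟩, fun x => ⟨fun j => - x.1 j, ?_⟩, ?_, ?_⟩
  · have := key (-n) x.1 x.2; simpa using this
  · have := key n x.1 x.2; exact this
  · intro x; ext j; simp
  · intro x; ext j; simp

lemma P_snoc (n : ℤ) (i : ℕ) (b : Fin i → ℤ) (d : ℤ) :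
    P n (i + 1) (Fin.snoc b d) ↔
      (d = -1 ∧ P (n + 2 ^ i) i b) ∨ (d = 0 ∧ P n i b) ∨ (d = 1 ∧ P (n - 2 ^ i) i b) := by
  have hsum : (∑ j : Fin (i + 1), (Fin.snoc b d : Fin (i + 1) → ℤ) j * 2 ^ (j : ℕ)) =
      (∑ j : Fin i, b j * 2 ^ (j : ℕ)) + d * 2 ^ i := by
    rw [Fin.sum_univ_castSucc]
    simp
  constructor
  · rintro ⟨h1, h2⟩
    have hd : d = -1 ∨ d = 0 ∨ d = 1 := by
      have := h1 (Fin.last i); simpa using this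
    have hb : ∀ j : Fin i, b j = -1 ∨ b j = 0 ∨ b j = 1 := by
      intro j; have := h1 (Fin.castSucc j); simpa using this
    rw [hsum] at h2
    rcases hd with hd | hd | hd
    · exact Or.inl ⟨hd, hb, by rw [h2, hd]; ring⟩
    · exact Or.inr (Or.inl ⟨hd, hb, by rw [h2, hd]; ring⟩)
    · exact Or.inr (Or.inr ⟨hd, hb, by rw [h2, hd]; ring⟩)
  · have hforall : ∀ (hd : d = -1 ∨ d = 0 ∨ d = 1)
        (hb : ∀ j : Fin i, b j = -1 ∨ b j = 0 ∨ b j = 1),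
        ∀ j : Fin (i+1), (Fin.snoc b d : Fin (i+1) → ℤ) j = -1 ∨
          (Fin.snoc b d : Fin (i+1) → ℤ) j = 0 ∨ (Fin.snoc b d : Fin (i+1) → ℤ) j = 1 := by
      intro hd hb j
      refine Fin.lastCases ?_ ?_ j
      · simpa using hd
      · intro j'; simpa using hb j'
    rintro (⟨hd, h1, h2⟩ | ⟨hd, h1, h2⟩ | ⟨hd, h1, h2⟩) <;>
      exact ⟨hforall (by simp [hd]) h1, by rw [hsum, hd, ← h2]; ring⟩

def prodEquiv (c : ℤ) (Q : (Fin i → ℤ) → Prop) :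
    {x : (Fin i → ℤ) × ℤ // x.2 = c ∧ Q x.1} ≃ {b : Fin i → ℤ // Q b} where
  toFun x := ⟨x.1.1, x.2.2⟩
  invFun b := ⟨(b.1, c), rfl, b.2⟩
  left_inv x := Subtype.ext (Prod.ext rfl x.2.1.symm)
  right_inv b := rfl

lemma split (n : ℤ) (i : ℕ) :
    numBSD n (i + 1) = numBSD (n + 2 ^ i) i + numBSD n i + numBSD (n - 2 ^ i) i := by
  classical
  set A : (Fin i → ℤ) × ℤ → Prop := fun x => x.2 = -1 ∧ P (n + 2 ^ i) i x.1 with hA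
  set B : (Fin i → ℤ) × ℤ → Prop := fun x => x.2 = 0 ∧ P n i x.1 with hB
  set C : (Fin i → ℤ) × ℤ → Prop := fun x => x.2 = 1 ∧ P (n - 2 ^ i) i x.1 with hC
  have e1 : {b : Fin (i+1) → ℤ // P n (i+1) b} ≃ {x : (Fin i → ℤ) × ℤ // A x ∨ B x ∨ C x} :=
  { toFun := fun x => ⟨(Fin.init x.1, x.1 (Fin.last i)), by
      have hx : P n (i+1) (Fin.snoc (Fin.init x.1) (x.1 (Fin.last i))) := by
        rw [Fin.snoc_init_self]; exact x.2
      exact (P_snoc n i _ _).mp hx⟩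
    invFun := fun x => ⟨Fin.snoc x.1.1 x.1.2, (P_snoc n i _ _).mpr x.2⟩
    left_inv := fun x => Subtype.ext (by simp [Fin.snoc_init_self])
    right_inv := fun x => Subtype.ext (by simp) }
  have hdisj1 : Disjoint A (fun x => B x ∨ C x) := by
    rw [disjoint_iff_inf_le]
    rintro x ⟨ha, hb | hc⟩
    · exact absurd (ha.1.symm.trans hb.1) (by norm_num)
    · exact absurd (ha.1.symm.trans hc.1) (by norm_num)
  have hdisj2 : Disjoint B C := by
    rw [disjoint_iff_inf_le]
    rintro x ⟨hb, hc⟩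
    exact absurd (hb.1.symm.trans hc.1) (by norm_num)
  haveI : Finite {x : (Fin i → ℤ) × ℤ // A x} :=
    Finite.of_equiv _ (prodEquiv (-1) (P (n + 2 ^ i) i)).symm
  haveI : Finite {x : (Fin i → ℤ) × ℤ // B x} :=
    Finite.of_equiv _ (prodEquiv 0 (P n i)).symm
  haveI : Finite {x : (Fin i → ℤ) × ℤ // C x} :=
    Finite.of_equiv _ (prodEquiv 1 (P (n - 2 ^ i) i)).symm
  haveI : Finite {x : (Fin i → ℤ) × ℤ // B x ∨ C x} :=
    Finite.of_equiv _ (subtypeOrEquiv B C hdisj2).symm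
  calc numBSD n (i+1) = Nat.card {x : (Fin i → ℤ) × ℤ // A x ∨ B x ∨ C x} := by
        rw [numBSD_def]; exact Nat.card_congr e1
    _ = Nat.card {x : (Fin i → ℤ) × ℤ // A x} + Nat.card {x : (Fin i → ℤ) × ℤ // B x ∨ C x} := by
        rw [Nat.card_congr (subtypeOrEquiv A (fun x => B x ∨ C x) hdisj1), Nat.card_sum]
    _ = Nat.card {x : (Fin i → ℤ) × ℤ // A x} + (Nat.card {x : (Fin i → ℤ) × ℤ // B x}
          + Nat.card {x : (Fin i → ℤ) × ℤ // C x}) := by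
        rw [Nat.card_congr (subtypeOrEquiv B C hdisj2), Nat.card_sum]
    _ = numBSD (n + 2 ^ i) i + numBSD n i + numBSD (n - 2 ^ i) i := by
        rw [numBSD_def, numBSD_def, numBSD_def,
          Nat.card_congr (prodEquiv (-1) (P (n + 2 ^ i) i)),
          Nat.card_congr (prodEquiv 0 (P n i)),
          Nat.card_congr (prodEquiv 1 (P (n - 2 ^ i) i))]
        omega

lemma step1 (n : ℤ) (i : ℕ) (h0 : 0 < n) :
    numBSD n (i + 1) = numBSD n i + numBSD (2 ^ i - n) i := by
  rw [split]
  have hpos : (0:ℤ) < 2 ^ i := by positivity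
  have h1 : numBSD (n + 2 ^ i) i = 0 := eq_zero_of_ge _ _ (by linarith)
  have h2 : numBSD (n - 2 ^ i) i = numBSD (2 ^ i - n) i := by
    have : (n - 2 ^ i : ℤ) = -(2 ^ i - n) := by ring
    rw [this, neg_eq]
  rw [h1, h2]
  omega

lemma step2 (n : ℤ) (i : ℕ) (h0 : 0 < n) (h : n ≤ 2 ^ i) :
    numBSD (2 ^ (i + 1) - n) (i + 1) = numBSD (2 ^ i - n) i := by
  rw [split]
  have h2 : (2:ℤ) ^ (i + 1) = 2 * 2 ^ i := by ring
  have e1 : numBSD (2 ^ (i + 1) - n + 2 ^ i) i = 0 := eq_zero_of_ge _ _ (by linarith)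
  have e2 : numBSD (2 ^ (i + 1) - n) i = 0 := eq_zero_of_ge _ _ (by linarith)
  have e3 : (2 ^ (i + 1) - n - 2 ^ i : ℤ) = 2 ^ i - n := by ring
  rw [e1, e2, e3]
  omega

end BSDaux

theorem bsd_arithmetic_progression (n k i : ℕ) (hn : 0 < n) (hni : n < 2 ^ i)
    (hk : IsLeast {j : ℕ | n ≤ 2 ^ j} k) :
    numBSD (n : ℤ) i = numBSD (n : ℤ) k + (i - k) * numBSD ((2 : ℤ) ^ k - n) k := by
  have hk1 : (n : ℤ) ≤ 2 ^ k := by exact_mod_cast hk.1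
  have hki : k ≤ i := hk.2 (le_of_lt hni)
  have h0 : (0 : ℤ) < n := by exact_mod_cast hn
  have main : ∀ m, k ≤ m →
      numBSD (n : ℤ) m = numBSD (n : ℤ) k + (m - k) * numBSD ((2:ℤ) ^ k - n) k ∧
      numBSD ((2:ℤ) ^ m - n) m = numBSD ((2:ℤ) ^ k - n) k := by
    intro m hm
    induction m, hm using Nat.le_induction with
    | base => simp
    | succ m hm ih =>
      have hpow : (2:ℤ) ^ k ≤ 2 ^ m := by
        have : (2:ℕ) ^ k ≤ 2 ^ m := Nat.pow_le_pow_right (by norm_num) hm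
        exact_mod_cast this
      have hnm : (n : ℤ) ≤ 2 ^ m := le_trans hk1 hpow
      constructor
      · rw [BSDaux.step1 _ _ h0, ih.1, ih.2]
        have hmk : m + 1 - k = (m - k) + 1 := by omega
        rw [hmk]
        ring
      · rw [BSDaux.step2 _ _ h0 hnm, ih.2]
  exact (main i hki).1
end
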